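/- arXiv:2205.03607 — 2 statements merged into one kernel-verified Lean document; each statement's English description precedes it below -/
import Mathlib

section
/- Fix α ∈ (0,1), T > 0, a positive integer N, and set h = T/N with grid points t_j = j·h. Define τ(s) = t_j for s ∈ (t_j, t_{j+1}]. Then there exists a constant C > 0 depending only on α and T (independent of h and N) such that for every n ∈ {0,1,...,N-1} and every t ∈ (t_n, t_{n+1}], one has ∫₀ᵗ |(t - τ(s))^(-α) - (t - s)^(-α)| ds ≤ C·h^(1-α). -/
open MeasureTheory intervalIntegral Real

theorem projected_kernel_difference_integral_bound
    (α T : ℝ) (hα : α ∈ Set.Ioo (0:ℝ) 1) (hT : 0 < T) :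
    ∃ C > 0, ∀ N : ℕ, 0 < N → ∀ n : ℕ, n < N →
      ∀ t ∈ Set.Ioc ((n : ℝ) * (T / N)) (((n : ℝ) + 1) * (T / N)),
        (∫ s in (0:ℝ)..t,
            |(t - ((⌈s / (T / N)⌉ : ℝ) - 1) * (T / N)) ^ (-α) - (t - s) ^ (-α)|)
          ≤ C * (T / N) ^ (1 - α) := by
  obtain ⟨hα0, hα1⟩ := hα
  refine ⟨1 / (1 - α), div_pos one_pos (by linarith), ?_⟩
  intro N hN n hn t ht
  set h : ℝ := T / N with hh
  have hhpos : 0 < h := by positivity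
  obtain ⟨ht1, ht2⟩ := ht
  have htpos : 0 < t := lt_of_le_of_lt (by positivity) ht1
  have hneg : -α ≤ 0 := by linarith
  set g : ℝ → ℝ := fun s => (t - s) ^ (-α) - (t + h - s) ^ (-α) with hg
  have hgint : IntervalIntegrable g volume 0 t := by
    apply IntervalIntegrable.sub
    · simpa using ((intervalIntegrable_rpow' (r := -α) (by linarith)
        (a := 0) (b := t)).comp_sub_left t).symm
    · simpa using ((intervalIntegrable_rpow' (r := -α) (by linarith)
        (a := h) (b := t + h)).comp_sub_left (t + h)).symm
  -- pointwise bound on Ioo 0 t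
  have hle : ∀ s ∈ Set.Ioo (0:ℝ) t,
      |(t - ((⌈s / h⌉ : ℝ) - 1) * h) ^ (-α) - (t - s) ^ (-α)| ≤ g s := by
    intro s hs
    obtain ⟨hs0, hst⟩ := hs
    set τ : ℝ := ((⌈s / h⌉ : ℝ) - 1) * h with hτ
    have hτ_le : τ ≤ s := by
      have h0 := (Int.ceil_lt_add_one (s / h)).le
      have h1 : ((⌈s / h⌉ : ℝ) - 1) ≤ s / h := by linarith
      calc τ ≤ (s / h) * h := mul_le_mul_of_nonneg_right h1 hhpos.le
        _ = s := by field_simp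
    have hτ_ge : s - h ≤ τ := by
      have h1 : s / h ≤ (⌈s / h⌉ : ℝ) := Int.le_ceil _
      have h2 : s / h - 1 ≤ (⌈s / h⌉ : ℝ) - 1 := by linarith
      calc s - h = (s / h - 1) * h := by field_simp
        _ ≤ τ := mul_le_mul_of_nonneg_right h2 hhpos.le
    have h1 : 0 < t - s := by linarith
    have hb1 : (t - τ) ^ (-α) ≤ (t - s) ^ (-α) :=
      Real.rpow_le_rpow_of_nonpos h1 (by linarith) hneg
    have hb2 : (t + h - s) ^ (-α) ≤ (t - τ) ^ (-α) :=
      Real.rpow_le_rpow_of_nonpos (by linarith) (by linarith) hneg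
    rw [abs_of_nonpos (by linarith)]
    simp only [hg]
    linarith
  rw [intervalIntegral.integral_of_le htpos.le]
  have hbound : (∫ s in Set.Ioc (0:ℝ) t,
      |(t - ((⌈s / h⌉ : ℝ) - 1) * h) ^ (-α) - (t - s) ^ (-α)|)
      ≤ ∫ s in Set.Ioc (0:ℝ) t, g s := by
    apply integral_mono_of_nonneg
    · exact Filter.Eventually.of_forall fun s => abs_nonneg _
    · exact (hgint.1).mono_set (by simp [Set.uIoc_of_le htpos.le])
    · have hae : ∀ᵐ s ∂(volume.restrict (Set.Ioc (0:ℝ) t)), s ∈ Set.Ioo (0:ℝ) t := by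
        rw [ae_restrict_iff' measurableSet_Ioc]
        refine measure_mono_null (fun x hx => ?_) (volume_singleton (a := t))
        simp only [Set.mem_compl_iff, Set.mem_setOf_eq] at hx
        rw [Classical.not_imp] at hx
        obtain ⟨⟨hx1, hx2⟩, hnot⟩ := hx
        have hxt : ¬ x < t := fun hc => hnot ⟨hx1, hc⟩
        simp [le_antisymm hx2 (not_lt.mp hxt)]
      filter_upwards [hae] with s hs using hle s hs
  refine hbound.trans ?_
  rw [← intervalIntegral.integral_of_le htpos.le]
  have hβ : (0:ℝ) < 1 - α := by linarith
  have hne : -α + 1 = 1 - α := by ring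
  have e1 : (∫ s in (0:ℝ)..t, (t - s) ^ (-α)) = (t ^ (1 - α)) / (1 - α) := by
    rw [intervalIntegral.integral_comp_sub_left (fun x => x ^ (-α)) t]
    rw [sub_zero, sub_self, integral_rpow (Or.inl (by linarith)),
      Real.zero_rpow (by linarith), hne, sub_zero]
  have e2 : (∫ s in (0:ℝ)..t, (t + h - s) ^ (-α))
      = ((t + h) ^ (1 - α) - h ^ (1 - α)) / (1 - α) := by
    rw [intervalIntegral.integral_comp_sub_left (fun x => x ^ (-α)) (t + h)]
    have : t + h - 0 = t + h := by ring
    rw [this, add_sub_cancel_left, integral_rpow (Or.inl (by linarith)), hne]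
  have hsplit : (∫ s in (0:ℝ)..t, g s)
      = (∫ s in (0:ℝ)..t, (t - s) ^ (-α)) - ∫ s in (0:ℝ)..t, (t + h - s) ^ (-α) := by
    apply intervalIntegral.integral_sub
    · simpa using ((intervalIntegrable_rpow' (r := -α) (by linarith)
        (a := 0) (b := t)).comp_sub_left t).symm
    · simpa using ((intervalIntegrable_rpow' (r := -α) (by linarith)
        (a := h) (b := t + h)).comp_sub_left (t + h)).symm
  rw [hsplit, e1, e2]
  have hmono : t ^ (1 - α) ≤ (t + h) ^ (1 - α) :=
    Real.rpow_le_rpow htpos.le (by linarith) hβ.le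
  rw [div_sub_div_same, one_div, inv_mul_eq_div, div_le_div_iff_of_pos_right hβ]
  linarith
end

section
/- Let α ∈ (0,1), T > 0, N a positive integer, h = T/N, t_n = n h, and τ(s) the left-endpoint grid projection. Then for t ∈ (t_n, t_{n+1}], ∫₀^{t_n} |(t - τ(s))^(-α) − (t_n - τ(s))^(-α)| ds ≤ ∫₀^{t_n} ((t_n - s)^(-α) − (t - s)^(-α)) ds ≤ (1/(1-α)) h^(1-α). -/
open MeasureTheory intervalIntegral Set

private lemma aux_antitone (α c : ℝ) (hα : 0 < α) (hc : 0 ≤ c) :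
    AntitoneOn (fun x : ℝ => x ^ (-α) - (x + c) ^ (-α)) (Set.Ioi 0) := by
  have hderiv : ∀ x ∈ interior (Set.Ioi (0:ℝ)),
      HasDerivAt (fun x : ℝ => x ^ (-α) - (x + c) ^ (-α))
        ((-α) * x ^ (-α - 1) - (-α) * (x + c) ^ (-α - 1) * 1) x := by
    intro x hx
    rw [interior_Ioi] at hx
    have h1 : HasDerivAt (fun x : ℝ => x ^ (-α)) ((-α) * x ^ (-α - 1)) x :=
      Real.hasDerivAt_rpow_const (Or.inl (ne_of_gt hx))
    have h2 : HasDerivAt (fun x : ℝ => (x + c) ^ (-α)) ((-α) * (x + c) ^ (-α - 1) * 1) x := by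
      have hx0 : (0:ℝ) < x := hx
      have hxc : (0:ℝ) < x + c := by linarith
      exact (Real.hasDerivAt_rpow_const (x := x + c) (Or.inl (ne_of_gt hxc))).comp x
        ((hasDerivAt_id x).add_const c)
    exact h1.sub h2
  apply antitoneOn_of_deriv_nonpos (convex_Ioi 0)
  · intro x hx
    have hx' : (0:ℝ) < x := hx
    have hxc : (0:ℝ) < x + c := by linarith
    have hc2 : ContinuousAt (fun y : ℝ => (y + c) ^ (-α)) x :=
      ContinuousAt.rpow_const ((continuous_id.add continuous_const).continuousAt)
        (Or.inl (by simpa using ne_of_gt hxc))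
    exact ((Real.continuousAt_rpow_const x (-α) (Or.inl (ne_of_gt hx'))).sub
      hc2).continuousWithinAt
  · intro x hx
    exact (hderiv x hx).differentiableAt.differentiableWithinAt
  · intro x hx
    rw [(hderiv x hx).deriv]
    rw [interior_Ioi] at hx
    have hle : (x + c) ^ (-α - 1) ≤ x ^ (-α - 1) :=
      Real.rpow_le_rpow_of_nonpos hx (by linarith) (by linarith)
    nlinarith

theorem projected_kernel_difference_history_bound
    (α h : ℝ) (hα : α ∈ Set.Ioo (0:ℝ) 1) (hh : 0 < h) (n : ℕ)
    (t : ℝ) (ht : t ∈ Set.Ioc ((n : ℝ) * h) (((n : ℝ) + 1) * h)) :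
    (∫ s in (0:ℝ)..((n : ℝ) * h),
        |(t - ((⌈s / h⌉ : ℝ) - 1) * h) ^ (-α) - ((n : ℝ) * h - ((⌈s / h⌉ : ℝ) - 1) * h) ^ (-α)|)
        ≤ (∫ s in (0:ℝ)..((n : ℝ) * h), (((n : ℝ) * h - s) ^ (-α) - (t - s) ^ (-α)))
      ∧ (∫ s in (0:ℝ)..((n : ℝ) * h), (((n : ℝ) * h - s) ^ (-α) - (t - s) ^ (-α)))
          ≤ (1 / (1 - α)) * h ^ (1 - α) := by
  obtain ⟨hα0, hα1⟩ := hα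
  obtain ⟨ht1, ht2⟩ := ht
  set tn : ℝ := (n : ℝ) * h with htn
  have htn0 : 0 ≤ tn := mul_nonneg (Nat.cast_nonneg n) hh.le
  have httn : t - tn ≤ h := by rw [htn]; linarith [ht2]
  have httn0 : 0 < t - tn := by linarith
  have hexp : (-1:ℝ) < -α := by linarith
  have h1α : (0:ℝ) < 1 - α := by linarith
  -- integrability of the two pieces of the RHS
  have hint1 : IntervalIntegrable (fun s : ℝ => (tn - s) ^ (-α)) volume 0 tn := by
    have := (intervalIntegrable_rpow' (a := 0) (b := tn) hexp).comp_sub_left tn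
    simpa using this.symm
  have hint2 : IntervalIntegrable (fun s : ℝ => (t - s) ^ (-α)) volume 0 tn := by
    have := (intervalIntegrable_rpow' (a := t) (b := t - tn) hexp).comp_sub_left t
    simpa using this
  have hintR : IntervalIntegrable (fun s : ℝ => (tn - s) ^ (-α) - (t - s) ^ (-α)) volume 0 tn :=
    hint1.sub hint2
  -- key pointwise facts for s in (0, tn), s ≠ tn region
  have hτle : ∀ s : ℝ, ((⌈s / h⌉ : ℝ) - 1) * h < s := by
    intro s
    have := Int.ceil_lt_add_one (s / h)
    have h2 : ((⌈s / h⌉ : ℝ) - 1) < s / h := by linarith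
    calc ((⌈s / h⌉ : ℝ) - 1) * h < (s / h) * h := by
          exact mul_lt_mul_of_pos_right h2 hh
      _ = s := by field_simp
  have hτtn : ∀ s : ℝ, s ≤ tn → ((⌈s / h⌉ : ℝ) - 1) * h ≤ tn - h := by
    intro s hs
    have hceil : ⌈s / h⌉ ≤ (n : ℤ) := by
      rw [Int.ceil_le]
      push_cast
      rw [div_le_iff₀ hh]
      linarith
    have : (⌈s / h⌉ : ℝ) ≤ (n : ℝ) := by exact_mod_cast hceil
    have := mul_le_mul_of_nonneg_right (sub_le_sub_right this 1) hh.le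
    calc ((⌈s / h⌉ : ℝ) - 1) * h ≤ ((n : ℝ) - 1) * h := this
      _ = tn - h := by rw [htn]; ring
  -- pointwise inequality on Ioc, away from s = tn
  have hptwise : ∀ s : ℝ, s < tn →
      |(t - ((⌈s / h⌉ : ℝ) - 1) * h) ^ (-α) - (tn - ((⌈s / h⌉ : ℝ) - 1) * h) ^ (-α)|
        ≤ (tn - s) ^ (-α) - (t - s) ^ (-α) := by
    intro s hstn
    set τ : ℝ := ((⌈s / h⌉ : ℝ) - 1) * h with hτ
    have hτs : τ < s := hτle s
    have hτtn' : τ ≤ tn - h := hτtn s hstn.le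
    have h1 : 0 < tn - τ := by linarith
    have h2 : tn - τ ≤ t - τ := by linarith
    have h3 : 0 < tn - s := by linarith
    have hAB : (t - τ) ^ (-α) ≤ (tn - τ) ^ (-α) :=
      Real.rpow_le_rpow_of_nonpos h1 h2 (by linarith)
    rw [abs_sub_comm, abs_of_nonneg (by linarith)]
    have hanti := aux_antitone α (t - tn) hα0 httn0.le
    have key := hanti (Set.mem_Ioi.mpr h3) (Set.mem_Ioi.mpr h1) (by linarith)
    simp only at key
    have e1 : tn - τ + (t - tn) = t - τ := by ring
    have e2 : tn - s + (t - tn) = t - s := by ring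
    rw [e1, e2] at key
    linarith
  -- integrability of LHS
  have hmeas : Measurable (fun s : ℝ =>
      |(t - ((⌈s / h⌉ : ℝ) - 1) * h) ^ (-α) - (tn - ((⌈s / h⌉ : ℝ) - 1) * h) ^ (-α)|) := by
    have hm : Measurable (fun s : ℝ => ((⌈s / h⌉ : ℝ) - 1) * h) := by
      have : Measurable (fun s : ℝ => (⌈s / h⌉ : ℝ)) :=
        measurable_from_top.comp (measurable_id.div_const h).ceil
      exact (this.sub measurable_const).mul_const h
    have hm1 : Measurable (fun s : ℝ => (t - ((⌈s / h⌉ : ℝ) - 1) * h) ^ (-α)) := by fun_prop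
    have hm2 : Measurable (fun s : ℝ => (tn - ((⌈s / h⌉ : ℝ) - 1) * h) ^ (-α)) := by fun_prop
    exact (hm1.sub hm2).abs
  have hintL : IntervalIntegrable (fun s : ℝ =>
      |(t - ((⌈s / h⌉ : ℝ) - 1) * h) ^ (-α) - (tn - ((⌈s / h⌉ : ℝ) - 1) * h) ^ (-α)|)
      volume 0 tn := by
    rw [intervalIntegrable_iff_integrableOn_Ioc_of_le htn0]
    apply Integrable.mono' (integrable_const (h ^ (-α)))
      hmeas.aestronglyMeasurable
    filter_upwards [ae_restrict_mem measurableSet_Ioc] with s hs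
    set τ : ℝ := ((⌈s / h⌉ : ℝ) - 1) * h with hτ
    have hτtn' : τ ≤ tn - h := hτtn s hs.2
    have h1 : h ≤ tn - τ := by linarith
    have h2 : h ≤ t - τ := by linarith
    have hb1 : (tn - τ) ^ (-α) ≤ h ^ (-α) :=
      Real.rpow_le_rpow_of_nonpos hh h1 (by linarith)
    have hb2 : (t - τ) ^ (-α) ≤ h ^ (-α) :=
      Real.rpow_le_rpow_of_nonpos hh h2 (by linarith)
    have hp1 : 0 ≤ (tn - τ) ^ (-α) := Real.rpow_nonneg (by linarith) _
    have hp2 : 0 ≤ (t - τ) ^ (-α) := Real.rpow_nonneg (by linarith) _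
    rw [Real.norm_eq_abs, abs_abs, abs_sub_le_iff]
    constructor <;> linarith
  -- first inequality
  have hfirst : (∫ s in (0:ℝ)..tn,
      |(t - ((⌈s / h⌉ : ℝ) - 1) * h) ^ (-α) - (tn - ((⌈s / h⌉ : ℝ) - 1) * h) ^ (-α)|)
      ≤ ∫ s in (0:ℝ)..tn, ((tn - s) ^ (-α) - (t - s) ^ (-α)) := by
    apply intervalIntegral.integral_mono_ae_restrict htn0 hintL hintR
    have hne : ∀ᵐ s ∂(volume.restrict (Set.Icc (0:ℝ) tn)), s ≠ tn := by
      refine ae_restrict_of_ae ?_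
      rw [ae_iff]
      simp only [not_not]
      rw [show {a : ℝ | a = tn} = {tn} from rfl]
      exact measure_singleton tn
    filter_upwards [ae_restrict_mem measurableSet_Icc, hne] with s hs hsne
    exact hptwise s (lt_of_le_of_ne hs.2 hsne)
  -- second inequality: compute the integral
  have hI1 : (∫ s in (0:ℝ)..tn, (tn - s) ^ (-α)) = tn ^ (1 - α) / (1 - α) := by
    rw [intervalIntegral.integral_comp_sub_left (fun u : ℝ => u ^ (-α)) tn]
    simp only [sub_self, sub_zero]
    rw [integral_rpow (Or.inl hexp)]
    rw [Real.zero_rpow (by linarith : -α + 1 ≠ 0)]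
    rw [show -α + 1 = 1 - α by ring]
    ring
  have hI2 : (∫ s in (0:ℝ)..tn, (t - s) ^ (-α))
      = (t ^ (1 - α) - (t - tn) ^ (1 - α)) / (1 - α) := by
    rw [intervalIntegral.integral_comp_sub_left (fun u : ℝ => u ^ (-α)) t]
    simp only [sub_zero]
    rw [integral_rpow (Or.inl hexp)]
    rw [show -α + 1 = 1 - α by ring]
  have hval : (∫ s in (0:ℝ)..tn, ((tn - s) ^ (-α) - (t - s) ^ (-α)))
      = (tn ^ (1 - α) - t ^ (1 - α) + (t - tn) ^ (1 - α)) / (1 - α) := by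
    rw [intervalIntegral.integral_sub hint1 hint2, hI1, hI2]
    ring
  have hsecond : (∫ s in (0:ℝ)..tn, ((tn - s) ^ (-α) - (t - s) ^ (-α)))
      ≤ (1 / (1 - α)) * h ^ (1 - α) := by
    rw [hval]
    have hb1 : tn ^ (1 - α) ≤ t ^ (1 - α) :=
      Real.rpow_le_rpow htn0 (by linarith) h1α.le
    have hb2 : (t - tn) ^ (1 - α) ≤ h ^ (1 - α) :=
      Real.rpow_le_rpow httn0.le httn h1α.le
    have hnum : tn ^ (1 - α) - t ^ (1 - α) + (t - tn) ^ (1 - α) ≤ h ^ (1 - α) := by linarith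
    have hdiv : (tn ^ (1 - α) - t ^ (1 - α) + (t - tn) ^ (1 - α)) / (1 - α)
        ≤ h ^ (1 - α) / (1 - α) := by gcongr
    have heq : h ^ (1 - α) / (1 - α) = (1 / (1 - α)) * h ^ (1 - α) := by ring
    linarith
  exact ⟨hfirst, hsecond⟩
end
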